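/- arXiv:1901.07324 — 2 statements merged into one kernel-verified Lean document; each statement's English description precedes it below -/
import Mathlib

section
/- Equality in the bound ∏_{1≤j<k≤d} sin²(y_j − y_k) ≤ 2^(−d(d−1)) d^d, for y₁,…,y_d ∈ [0,π), holds if and only if the set {y₁,…,y_d} is an arithmetic progression with common difference π/d. -/
/-
With `z j = exp (2 i y j)` one has `|z j - z k| = 2 |sin (y j - y k)|`, so the product equals
`2 ^ (-d (d - 1)) |det V|²` for the Vandermonde matrix `V` of the `z j`. Its Gram matrix
`G = V Vᴴ` is positive semidefinite with diagonal entries `d`, so AM-GM on the eigenvalues gives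
Hadamard's bound `det G ≤ d ^ d`, with equality iff `G = d • 1`. Off the diagonal,
`G j l = ∑ i < d, w ^ i` with `w = exp (2 i (y j - y l))`, which vanishes iff `w` is a `d`-th root
of unity other than `1`, i.e. iff `y j - y l ∈ (π / d) ℤ \ π ℤ`. For `y j ∈ [0, π)` this says
that the `y j` are distinct and congruent modulo `π / d`, so they fill the `d` places of an
arithmetic progression of step `π / d`.
-/

open Real Finset Matrix
open scoped ComplexOrder

@[to_additive]
theorem Finset.prod_filter_lt_eq_prod_prod_Ioi {ι M : Type*} [Fintype ι] [LinearOrder ι]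
    [LocallyFiniteOrderTop ι] [CommMonoid M] (g : ι × ι → M) :
    ∏ p ∈ univ.filter (fun p : ι × ι => p.1 < p.2), g p = ∏ i, ∏ j ∈ Ioi i, g (i, j) := by
  rw [prod_sigma']
  exact prod_nbij' (fun p => ⟨p.1, p.2⟩) (fun p => (p.1, p.2)) (by simp) (by simp) (by simp)
    (by simp) (by simp)

theorem Fin.card_filter_fst_lt_snd_mul_two (d : ℕ) :
    #(univ.filter fun p : Fin d × Fin d => p.1 < p.2) * 2 = d * (d - 1) := by
  rw [card_eq_sum_ones, sum_filter_lt_eq_sum_sum_Ioi]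
  simp only [← card_eq_sum_ones, Fin.card_Ioi]
  rw [Fin.sum_univ_eq_sum_range (fun i => d - 1 - i), sum_range_reflect (fun i => i),
    sum_range_id_mul_two]

theorem geom_sum_eq_zero_iff_pow_eq_one_and_ne_one {K : Type*} [Field K] [CharZero K] {n : ℕ}
    (hn : n ≠ 0) (w : K) : ∑ i ∈ range n, w ^ i = 0 ↔ w ^ n = 1 ∧ w ≠ 1 := by
  rcases eq_or_ne w 1 with rfl | hw
  · simp [hn]
  · rw [geom_sum_eq hw, div_eq_zero_iff, sub_eq_zero, sub_eq_zero]
    simp [hw]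

theorem Real.eq_of_sum_eq_card_mul_of_prod_eq_pow {ι : Type*} [Fintype ι] {z : ι → ℝ} {t : ℝ}
    (hz : ∀ i, 0 ≤ z i) (ht : 0 ≤ t) (hsum : ∑ i, z i = Fintype.card ι * t)
    (hprod : ∏ i, z i = t ^ Fintype.card ι) (i : ι) : z i = t := by
  have hn : (Fintype.card ι : ℝ) ≠ 0 := by
    have := Fintype.card_pos_iff.mpr ⟨i⟩
    positivity
  have hw : ∑ _i : ι, (Fintype.card ι : ℝ)⁻¹ = 1 := by simp [hn]
  have hmean : ∑ j, (Fintype.card ι : ℝ)⁻¹ * z j = t := by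
    rw [← Finset.mul_sum, hsum, inv_mul_cancel_left₀ hn]
  have hgeom : ∏ j, z j ^ (Fintype.card ι : ℝ)⁻¹ = t := by
    rw [Real.finsetProd_rpow _ _ fun j _ => hz j, hprod, Real.pow_rpow_inv_natCast ht
      (by exact_mod_cast hn)]
  have := (Real.geom_mean_eq_arith_mean_weighted_iff_of_pos' univ
    (fun _ => (Fintype.card ι : ℝ)⁻¹) z (fun _ _ => by positivity) hw fun j _ => hz j).mp
      (hgeom.trans hmean.symm) i (mem_univ i)
  rwa [hmean] at this

theorem Matrix.PosSemidef.eq_smul_one_of_trace_eq_of_det_eq {n 𝕜 : Type*} [Fintype n]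
    [DecidableEq n] [RCLike 𝕜] {A : Matrix n n 𝕜} (hA : A.PosSemidef) {t : ℝ} (ht : 0 ≤ t)
    (htrace : A.trace = Fintype.card n * t) (hdet : A.det = t ^ Fintype.card n) :
    A = (t : 𝕜) • 1 := by
  have heig : ∀ i, hA.1.eigenvalues i = t := by
    refine Real.eq_of_sum_eq_card_mul_of_prod_eq_pow hA.eigenvalues_nonneg ht ?_ ?_
    · exact_mod_cast hA.1.trace_eq_sum_eigenvalues.symm.trans htrace
    · exact_mod_cast hA.1.det_eq_prod_eigenvalues.symm.trans hdet
  rw [hA.1.spectral_theorem, show RCLike.ofReal ∘ hA.1.eigenvalues = fun _ => (t : 𝕜) from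
    funext fun i => by simp [heig i], ← smul_one_eq_diagonal, map_smul, map_one]

theorem Matrix.det_mul_conjTranspose_self {n : Type*} [Fintype n] [DecidableEq n]
    (A : Matrix n n ℂ) : (A * Aᴴ).det = (‖A.det‖ ^ 2 : ℝ) := by
  rw [det_mul, det_conjTranspose, Complex.star_def, Complex.mul_conj, Complex.normSq_eq_norm_sq]

theorem Matrix.vandermonde_mul_conjTranspose_apply {R : Type*} [CommRing R] [StarRing R] {d : ℕ}
    (z : Fin d → R) (j l : Fin d) :
    (vandermonde z * (vandermonde z)ᴴ) j l = ∑ i ∈ range d, (z j * star (z l)) ^ i := by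
  rw [mul_apply, ← Fin.sum_univ_eq_sum_range]
  simp [vandermonde_apply, mul_pow, star_pow]

theorem Matrix.vandermonde_mul_conjTranspose_eq_smul_one_iff {R : Type*} [CommRing R] [StarRing R]
    {d : ℕ} {z : Fin d → R} (hz : ∀ j, z j * star (z j) = 1) :
    vandermonde z * (vandermonde z)ᴴ = (d : R) • 1 ↔
      Pairwise fun j l => ∑ i ∈ range d, (z j * star (z l)) ^ i = 0 := by
  simp only [← ext_iff, vandermonde_mul_conjTranspose_apply, smul_apply, one_apply, smul_eq_mul,
    mul_ite, mul_one, mul_zero]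
  constructor
  · intro h j l hjl
    simpa [hjl] using h j l
  · intro h j l
    split_ifs with hjl
    · simp [hjl, hz]
    · exact h hjl

theorem Matrix.norm_det_vandermonde_sq_eq_iff {d : ℕ} {z : Fin d → ℂ}
    (hz : ∀ j, z j * star (z j) = 1) :
    ‖(vandermonde z).det‖ ^ 2 = (d : ℝ) ^ d ↔ vandermonde z * (vandermonde z)ᴴ = (d : ℂ) • 1 := by
  rw [← Complex.ofReal_inj, ← det_mul_conjTranspose_self]
  constructor
  · intro hdet
    refine (posSemidef_self_mul_conjTranspose _).eq_smul_one_of_trace_eq_of_det_eq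
      (t := d) d.cast_nonneg ?_ (by simpa using hdet)
    simp only [trace, diag_apply, vandermonde_mul_conjTranspose_apply, hz, one_pow, sum_const,
      card_range, card_univ, Fintype.card_fin, nsmul_eq_mul, mul_one]
    push_cast
    ring
  · intro h
    simp [h]

theorem Complex.exp_ofReal_mul_I_eq_one_iff (θ : ℝ) :
    exp (θ * I) = 1 ↔ ∃ n : ℤ, θ = n * (2 * π) := by
  rw [exp_eq_one_iff]
  refine exists_congr fun n => ?_
  rw [show (n : ℂ) * (2 * π * I) = ((n * (2 * π) : ℝ) : ℂ) * I by push_cast; ring]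
  exact ⟨fun h => ofReal_injective (mul_right_cancel₀ I_ne_zero h), fun h => by rw [h]⟩

theorem Complex.exp_two_mul_I_mul_star (u v : ℝ) :
    exp (2 * u * I) * star (exp (2 * v * I)) = exp (2 * (u - v : ℝ) * I) := by
  rw [star_def, ← exp_conj, ← exp_add]
  simp only [map_mul, conj_ofReal, conj_I, map_ofNat]
  push_cast
  ring_nf

theorem Complex.norm_exp_two_mul_I_sub_sq (u v : ℝ) :
    ‖exp (2 * u * I) - exp (2 * v * I)‖ ^ 2 = 4 * Real.sin (u - v) ^ 2 := by
  have h : exp (2 * u * I) - exp (2 * v * I)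
      = exp ((u + v : ℝ) * I) * (2 * I * Real.sin (u - v)) := by
    have e₁ : exp ((u + v : ℝ) * I) * exp ((u - v : ℝ) * I) = exp (2 * u * I) := by
      rw [← exp_add]; push_cast; ring_nf
    have e₂ : exp ((u + v : ℝ) * I) * exp (-(u - v : ℝ) * I) = exp (2 * v * I) := by
      rw [← exp_add]; push_cast; ring_nf
    rw [ofReal_sin, Complex.sin]
    linear_combination e₂ - e₁ - (exp ((u + v : ℝ) * I) * exp (-(u - v : ℝ) * I)
      - exp ((u + v : ℝ) * I) * exp ((u - v : ℝ) * I)) * I_mul_I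
  rw [h, norm_mul, norm_exp_ofReal_mul_I, one_mul, norm_mul, norm_mul, norm_I, norm_real,
    Real.norm_eq_abs, mul_pow, mul_pow, sq_abs]
  norm_num

theorem Complex.geom_sum_exp_two_mul_I_eq_zero_iff {d : ℕ} (hd : d ≠ 0) {a : ℝ} (ha : |a| < π) :
    ∑ i ∈ range d, exp (2 * a * I) ^ i = 0 ↔ (∃ n : ℤ, a = n * (π / d)) ∧ a ≠ 0 := by
  have hd' : (d : ℝ) ≠ 0 := Nat.cast_ne_zero.mpr hd
  have hpow : ∀ n : ℤ, 2 * d * a = n * (2 * π) ↔ a = n * (π / d) := fun n => by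
    field_simp
  have hone : (∃ n : ℤ, 2 * a = n * (2 * π)) ↔ a = 0 := by
    refine ⟨fun ⟨n, hn⟩ => ?_, fun h => ⟨0, by simp [h]⟩⟩
    have hn : a = n * π := by linarith
    rw [hn, abs_mul, abs_of_pos pi_pos, mul_lt_iff_lt_one_left pi_pos] at ha
    rw [hn, Int.abs_lt_one_iff.mp (mod_cast ha : |n| < 1), Int.cast_zero, zero_mul]
  rw [geom_sum_eq_zero_iff_pow_eq_one_and_ne_one hd, ← exp_nat_mul,
    show (d : ℂ) * (2 * a * I) = ((2 * d * a : ℝ) : ℂ) * I by push_cast; ring,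
    show (2 * a * I) = ((2 * a : ℝ) : ℂ) * I by push_cast; ring,
    exp_ofReal_mul_I_eq_one_iff, Ne, exp_ofReal_mul_I_eq_one_iff]
  exact and_congr (exists_congr hpow) (not_congr hone)

theorem Matrix.norm_det_vandermonde_exp_sq {d : ℕ} (y : Fin d → ℝ) :
    ‖(vandermonde fun j => Complex.exp (2 * y j * Complex.I)).det‖ ^ 2
      = 2 ^ (d * (d - 1)) *
        ∏ p ∈ univ.filter (fun p : Fin d × Fin d => p.1 < p.2), Real.sin (y p.1 - y p.2) ^ 2 := by
  calc ‖(vandermonde fun j => Complex.exp (2 * y j * Complex.I)).det‖ ^ 2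
      = ∏ p ∈ univ.filter (fun p : Fin d × Fin d => p.1 < p.2),
          4 * Real.sin (y p.1 - y p.2) ^ 2 := by
        rw [det_vandermonde, prod_filter_lt_eq_prod_prod_Ioi, norm_prod, ← prod_pow]
        refine prod_congr rfl fun i _ => ?_
        rw [norm_prod, ← prod_pow]
        refine prod_congr rfl fun j _ => ?_
        rw [Complex.norm_exp_two_mul_I_sub_sq, ← neg_sub (y i), Real.sin_neg, neg_sq]
    _ = 2 ^ (d * (d - 1)) *
        ∏ p ∈ univ.filter (fun p : Fin d × Fin d => p.1 < p.2), Real.sin (y p.1 - y p.2) ^ 2 := by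
        rw [prod_mul_distrib, prod_const, ← Fin.card_filter_fst_lt_snd_mul_two, pow_mul']
        norm_num

theorem exists_perm_eq_add_mul_of_injective {d : ℕ} {δ : ℝ} (hδ : 0 < δ) {y : Fin d → ℝ}
    (hy : ∀ k, y k ∈ Set.Ico 0 (d * δ)) (hinj : Function.Injective y)
    (hmul : ∀ j l, ∃ n : ℤ, y j - y l = n * δ) :
    ∃ c : ℝ, ∃ σ : Equiv.Perm (Fin d), ∀ k : Fin d, y (σ k) = c + k * δ := by
  rcases Nat.eq_zero_or_pos d with rfl | hd
  · exact ⟨0, 1, fun k => k.elim0⟩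
  have hnonneg : ∀ j, 0 ≤ y j / δ := fun j => div_nonneg (hy j).1 hδ.le
  have hfract : ∀ j, Int.fract (y j / δ) = Int.fract (y ⟨0, hd⟩ / δ) := fun j => by
    obtain ⟨n, hn⟩ := hmul j ⟨0, hd⟩
    rw [show y j / δ = y ⟨0, hd⟩ / δ + n by field_simp; linarith, Int.fract_add_intCast]
  let f : Fin d → Fin d := fun j =>
    ⟨⌊y j / δ⌋₊, (Nat.floor_lt (hnonneg j)).mpr ((div_lt_iff₀ hδ).mpr (hy j).2)⟩
  have hyf : ∀ j, y j = δ * Int.fract (y ⟨0, hd⟩ / δ) + (f j : ℕ) * δ := fun j => by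
    rw [← hfract j, natCast_floor_eq_intCast_floor (hnonneg j), ← Int.self_sub_floor]
    field_simp
    ring
  have hf : Function.Injective f := fun j l h => hinj (by rw [hyf j, hyf l, h])
  let σ := Equiv.ofBijective f (Finite.injective_iff_bijective.mp hf)
  exact ⟨_, σ.symm, fun k => by rw [hyf, show f (σ.symm k) = k from σ.apply_symm_apply k]⟩

theorem exists_perm_eq_add_mul_iff {d : ℕ} {δ : ℝ} (hδ : 0 < δ) {y : Fin d → ℝ}
    (hy : ∀ k, y k ∈ Set.Ico 0 (d * δ)) :
    (∃ c : ℝ, ∃ σ : Equiv.Perm (Fin d), ∀ k : Fin d, y (σ k) = c + k * δ) ↔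
      Function.Injective y ∧ ∀ j l, ∃ n : ℤ, y j - y l = n * δ := by
  refine ⟨fun ⟨c, σ, hσ⟩ => ⟨fun j l h => ?_, fun j l => ?_⟩,
    fun ⟨hinj, hmul⟩ => exists_perm_eq_add_mul_of_injective hδ hy hinj hmul⟩
  · rw [← σ.apply_symm_apply j, ← σ.apply_symm_apply l, hσ, hσ] at h
    have := mul_right_cancel₀ hδ.ne' (add_left_cancel h)
    exact σ.symm.injective (Fin.ext (by exact_mod_cast this))
  · refine ⟨(σ.symm j : ℕ) - (σ.symm l : ℕ), ?_⟩
    rw [← σ.apply_symm_apply j, ← σ.apply_symm_apply l, hσ, hσ]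
    simp only [Equiv.symm_apply_apply]
    push_cast
    ring

theorem pairwise_geom_sum_exp_two_mul_I_eq_zero_iff {d : ℕ} (hd : d ≠ 0) {y : Fin d → ℝ}
    (hy : ∀ k, y k ∈ Set.Ico 0 π) :
    (Pairwise fun j l => ∑ i ∈ range d,
        (Complex.exp (2 * y j * Complex.I) * star (Complex.exp (2 * y l * Complex.I))) ^ i = 0) ↔
      Function.Injective y ∧ ∀ j l, ∃ n : ℤ, y j - y l = n * (π / d) := by
  have hsum : ∀ j l, ∑ i ∈ range d,
      (Complex.exp (2 * y j * Complex.I) * star (Complex.exp (2 * y l * Complex.I))) ^ i = 0 ↔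
        (∃ n : ℤ, y j - y l = n * (π / d)) ∧ y j ≠ y l := fun j l => by
    rw [Complex.exp_two_mul_I_mul_star, Complex.geom_sum_exp_two_mul_I_eq_zero_iff hd
      (abs_sub_lt_of_nonneg_of_lt (hy j).1 (hy j).2 (hy l).1 (hy l).2), sub_ne_zero]
  simp only [hsum]
  refine ⟨fun h => ⟨fun j l hjl => ?_, fun j l => ?_⟩, fun ⟨hinj, hmul⟩ j l hjl =>
    ⟨hmul j l, hinj.ne hjl⟩⟩
  · by_contra hne
    exact (h hne).2 hjl
  · rcases eq_or_ne j l with rfl | hjl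
    · exact ⟨0, by simp⟩
    · exact (h hjl).1

theorem prod_sin_sq_eq_iff (d : ℕ) (hd : 2 ≤ d) (y : Fin d → ℝ)
    (hy : ∀ k, y k ∈ Set.Ico (0 : ℝ) π) :
    (∏ p ∈ Finset.univ.filter (fun p : Fin d × Fin d => p.1 < p.2),
        Real.sin (y p.1 - y p.2) ^ 2 = (2 : ℝ) ^ (-(d * (d - 1) : ℤ)) * d ^ d) ↔
      ∃ c : ℝ, ∃ σ : Equiv.Perm (Fin d), ∀ k : Fin d, y (σ k) = c + k * (π / d) := by
  have hd₀ : d ≠ 0 := by omega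
  have hz : ∀ j, Complex.exp (2 * y j * Complex.I) * star (Complex.exp (2 * y j * Complex.I)) = 1 :=
    fun j => by rw [Complex.exp_two_mul_I_mul_star, sub_self]; simp
  have hy' : ∀ k, y k ∈ Set.Ico 0 (d * (π / d)) := by
    rwa [mul_div_cancel₀ _ (Nat.cast_ne_zero.mpr hd₀)]
  have hpow : (2 : ℝ) ^ (-(d * (d - 1) : ℤ)) = ((2 : ℝ) ^ (d * (d - 1)))⁻¹ := by
    rw [← zpow_natCast, ← _root_.zpow_neg, Nat.cast_mul, Nat.cast_sub (by omega), Nat.cast_one]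
  rw [hpow, eq_inv_mul_iff_mul_eq₀ (by positivity), ← norm_det_vandermonde_exp_sq,
    norm_det_vandermonde_sq_eq_iff hz, vandermonde_mul_conjTranspose_eq_smul_one_iff hz,
    pairwise_geom_sum_exp_two_mul_I_eq_zero_iff hd₀ hy,
    exists_perm_eq_add_mul_iff (by positivity) hy']
end

section
/- For points z₁, …, z_d on the unit circle in ℂ with d ≥ 2, the product ∏_{1≤j<k≤d} |z_j − z_k|² is at most d^d, with equality if and only if the z_k are (up to rotation) the d-th roots of unity. -/
open Complex Finset Matrix
open scoped ComplexOrder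

/-!
The product is `|det V|² = det (V Vᴴ)` for the Vandermonde matrix `V` of the `z k`. The Gram
matrix `G = V Vᴴ` is positive semidefinite and, as `|z k| = 1`, its diagonal entries are all `d`;
AM-GM on its eigenvalues gives `det G ≤ (tr G / d) ^ d = d ^ d`, with equality iff all eigenvalues
are `d`, i.e. `G = d • 1`. The off-diagonal entries of `G` are the geometric sums
`∑ k < d, (z i / z j) ^ k`, which vanish iff `z i ≠ z j` and `z i ^ d = z j ^ d`; and `d` distinct
points with a common `d`-th power are a rotation of the `d`-th roots of unity.
-/

namespace Real

variable {ι : Type*} [Fintype ι] {x : ι → ℝ} {c : ℝ}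

theorem prod_le_pow_of_sum_eq (hx : ∀ i, 0 ≤ x i) (hsum : ∑ i, x i = Fintype.card ι * c) :
    ∏ i, x i ≤ c ^ Fintype.card ι := by
  rcases isEmpty_or_nonempty ι with hι | hι
  · simp
  set n := Fintype.card ι
  have hn : n ≠ 0 := Fintype.card_ne_zero
  have amgm := geom_mean_le_arith_mean_weighted univ (fun _ => (n : ℝ)⁻¹) x
    (fun _ _ => by positivity) (by simp [n]) (fun i _ => hx i)
  rw [Real.finsetProd_rpow _ _ (fun i _ => hx i), ← Finset.mul_sum, hsum,
    inv_mul_cancel_left₀ (by positivity)] at amgm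
  have hprod : 0 ≤ ∏ i, x i := prod_nonneg fun i _ => hx i
  calc ∏ i, x i = ((∏ i, x i) ^ (n⁻¹ : ℝ)) ^ n := (rpow_inv_natCast_pow hprod hn).symm
    _ ≤ c ^ n := pow_le_pow_left₀ (rpow_nonneg hprod _) amgm n

theorem prod_eq_pow_iff_of_sum_eq (hx : ∀ i, 0 ≤ x i) (hsum : ∑ i, x i = Fintype.card ι * c) :
    ∏ i, x i = c ^ Fintype.card ι ↔ ∀ i, x i = c := by
  refine ⟨fun h => ?_, fun h => by simp [h]⟩
  rcases isEmpty_or_nonempty ι with hι | hι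
  · exact isEmptyElim
  set n := Fintype.card ι
  have hn : n ≠ 0 := Fintype.card_ne_zero
  have hc : 0 ≤ c :=
    nonneg_of_mul_nonneg_right (hsum ▸ sum_nonneg fun i _ => hx i) (by positivity)
  have amgm := geom_mean_eq_arith_mean_weighted_iff_of_pos' univ (fun _ => (n : ℝ)⁻¹) x
    (fun _ _ => by positivity) (by simp [n]) (fun i _ => hx i)
  rw [Real.finsetProd_rpow _ _ (fun i _ => hx i), ← Finset.mul_sum, hsum,
    inv_mul_cancel_left₀ (by positivity), h, pow_rpow_inv_natCast hc hn] at amgm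
  exact fun i => amgm.mp rfl i (mem_univ i)

end Real

theorem geom_sum_eq_zero_iff_pow_eq_one {K : Type*} [Field K] [CharZero K] {x : K} {n : ℕ}
    (hn : n ≠ 0) : ∑ i ∈ range n, x ^ i = 0 ↔ x ≠ 1 ∧ x ^ n = 1 := by
  by_cases hx : x = 1
  · simp [hx, hn]
  · simp [geom_sum_eq hx, sub_eq_zero, hx]

namespace Matrix

variable {𝕜 n : Type*} [RCLike 𝕜] [Fintype n] [DecidableEq n] {A : Matrix n n 𝕜} {c : ℝ}

theorem IsHermitian.sum_eigenvalues_eq_re_trace (hA : A.IsHermitian) :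
    ∑ i, hA.eigenvalues i = RCLike.re (K := 𝕜) A.trace := by
  simp [hA.trace_eq_sum_eigenvalues]

theorem IsHermitian.eq_smul_one_of_eigenvalues_eq (hA : A.IsHermitian)
    (h : ∀ i, hA.eigenvalues i = c) : A = (c : 𝕜) • 1 := by
  have hdiag : (RCLike.ofReal ∘ hA.eigenvalues : n → 𝕜) = fun _ => (c : 𝕜) :=
    funext fun i => congrArg _ (h i)
  rw [hA.spectral_theorem, hdiag, ← smul_one_eq_diagonal, map_smul, map_one]

theorem PosSemidef.det_le_pow_of_trace_eq (hA : A.PosSemidef)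
    (htr : A.trace = Fintype.card n * (c : 𝕜)) : A.det ≤ (c : 𝕜) ^ Fintype.card n := by
  have hsum : ∑ i, hA.1.eigenvalues i = Fintype.card n * c := by
    simp [hA.1.sum_eigenvalues_eq_re_trace, htr]
  rw [hA.1.det_eq_prod_eigenvalues, ← RCLike.ofReal_prod, ← RCLike.ofReal_pow,
    RCLike.ofReal_le_ofReal]
  exact Real.prod_le_pow_of_sum_eq hA.eigenvalues_nonneg hsum

theorem PosSemidef.det_eq_pow_iff_of_trace_eq (hA : A.PosSemidef)
    (htr : A.trace = Fintype.card n * (c : 𝕜)) :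
    A.det = (c : 𝕜) ^ Fintype.card n ↔ A = (c : 𝕜) • 1 := by
  refine ⟨fun h => ?_, fun h => by rw [h, det_smul, det_one, mul_one]⟩
  have hsum : ∑ i, hA.1.eigenvalues i = Fintype.card n * c := by
    simp [hA.1.sum_eigenvalues_eq_re_trace, htr]
  rw [hA.1.det_eq_prod_eigenvalues, ← RCLike.ofReal_prod, ← RCLike.ofReal_pow,
    RCLike.ofReal_inj, Real.prod_eq_pow_iff_of_sum_eq hA.eigenvalues_nonneg hsum] at h
  exact hA.1.eq_smul_one_of_eigenvalues_eq h

theorem det_mul_conjTranspose_self_s4 (A : Matrix n n 𝕜) :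
    (A * Aᴴ).det = ((‖A.det‖ ^ 2 : ℝ) : 𝕜) := by
  rw [det_mul, det_conjTranspose, RCLike.star_def, RCLike.mul_conj]
  norm_cast

theorem norm_det_vandermonde {K : Type*} [NormedField K] {n : ℕ} (v : Fin n → K) :
    ‖(vandermonde v).det‖ = ∏ p ∈ univ.filter (fun p : Fin n × Fin n => p.1 < p.2),
      ‖v p.1 - v p.2‖ := by
  rw [det_vandermonde, norm_prod]
  simp_rw [norm_prod, norm_sub_rev]
  exact (prod_finset_product' _ _ (fun i => Ioi i) (by simp)).symm

theorem vandermonde_mul_conjTranspose_apply_s4 {R : Type*} [CommRing R] [StarRing R] {n : ℕ}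
    (v : Fin n → R) (i j : Fin n) :
    (vandermonde v * (vandermonde v)ᴴ) i j = ∑ k ∈ range n, (v i * star (v j)) ^ k := by
  simp [← Fin.sum_univ_eq_sum_range, mul_apply, mul_pow]

end Matrix

namespace IsPrimitiveRoot

variable {K : Type*} [Field K] {ζ w : K} {d : ℕ}

theorem mul_pow_pow (hζ : IsPrimitiveRoot ζ d) (w : K) (k : ℕ) : (w * ζ ^ k) ^ d = w ^ d := by
  rw [mul_pow, pow_right_comm, hζ.pow_eq_one, one_pow, mul_one]

theorem injective_mul_pow (hζ : IsPrimitiveRoot ζ d) (hw : w ≠ 0) :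
    Function.Injective fun k : Fin d => w * ζ ^ (k : ℕ) :=
  fun i j h => Fin.ext <| hζ.pow_inj i.2 j.2 (mul_left_cancel₀ hw h)

theorem exists_perm_eq_mul_pow [NeZero d] (hζ : IsPrimitiveRoot ζ d) (hw : w ≠ 0)
    {z : Fin d → K} (hz : Function.Injective z) (hzw : ∀ i, z i ^ d = w ^ d) :
    ∃ σ : Equiv.Perm (Fin d), ∀ k, z (σ k) = w * ζ ^ (k : ℕ) := by
  have hroot : ∀ i, ∃ m : Fin d, z i = w * ζ ^ (m : ℕ) := fun i => by
    obtain ⟨m, hm, hζm⟩ := hζ.eq_pow_of_pow_eq_one (ξ := z i / w) (by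
      rw [div_pow, hzw, div_self (pow_ne_zero _ hw)])
    exact ⟨⟨m, hm⟩, by rw [hζm, mul_div_cancel₀ _ hw]⟩
  choose m hm using hroot
  have hm_inj : Function.Injective m := fun i j h => hz (by rw [hm i, hm j, h])
  let e := Equiv.ofBijective m (Finite.injective_iff_bijective.mp hm_inj)
  refine ⟨e.symm, fun k => ?_⟩
  rw [hm]
  exact congrArg (fun m : Fin d => w * ζ ^ (m : ℕ)) (e.apply_symm_apply k)

theorem injective_and_pow_eq_iff_exists_perm [NeZero d] (hζ : IsPrimitiveRoot ζ d)
    (hw : w ≠ 0) {z : Fin d → K} :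
    (Function.Injective z ∧ ∀ i, z i ^ d = w ^ d) ↔
      ∃ σ : Equiv.Perm (Fin d), ∀ k, z (σ k) = w * ζ ^ (k : ℕ) := by
  refine ⟨fun ⟨hz, hzw⟩ => hζ.exists_perm_eq_mul_pow hw hz hzw, fun ⟨σ, hσ⟩ => ⟨?_, fun i => ?_⟩⟩
  · have hzσ : z ∘ σ = fun k : Fin d => w * ζ ^ (k : ℕ) := funext hσ
    exact (Function.Injective.of_comp_iff' z σ.bijective).mp (hzσ ▸ hζ.injective_mul_pow hw)
  · rw [← σ.apply_symm_apply i, hσ, hζ.mul_pow_pow]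

end IsPrimitiveRoot

section UnitCircle

variable {d : ℕ} {z : Fin d → ℂ}

theorem vandermonde_mul_conjTranspose_apply_of_norm_eq_one (hz : ∀ k, ‖z k‖ = 1) (i j : Fin d) :
    (vandermonde z * (vandermonde z)ᴴ) i j = ∑ k ∈ range d, (z i / z j) ^ k := by
  rw [vandermonde_mul_conjTranspose_apply_s4, div_eq_mul_inv, Complex.inv_eq_conj (hz j)]
  rfl

theorem trace_vandermonde_mul_conjTranspose_of_norm_eq_one (hz : ∀ k, ‖z k‖ = 1) :
    (vandermonde z * (vandermonde z)ᴴ).trace = d * d := by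
  have hz0 : ∀ i, z i ≠ 0 := fun i => norm_ne_zero_iff.mp (by simp [hz i])
  simp [trace, vandermonde_mul_conjTranspose_apply_of_norm_eq_one hz, div_self (hz0 _)]

theorem vandermonde_mul_conjTranspose_eq_smul_one_iff (hz : ∀ k, ‖z k‖ = 1) :
    vandermonde z * (vandermonde z)ᴴ = (d : ℂ) • 1 ↔
      Function.Injective z ∧ ∀ i j, z i ^ d = z j ^ d := by
  have hz0 : ∀ i, z i ≠ 0 := fun i => norm_ne_zero_iff.mp (by simp [hz i])
  have hdiag : ∀ i, (vandermonde z * (vandermonde z)ᴴ) i i = d := fun i => by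
    simp [vandermonde_mul_conjTranspose_apply_of_norm_eq_one hz, div_self (hz0 i)]
  have hoff : ∀ i j,
      (vandermonde z * (vandermonde z)ᴴ) i j = 0 ↔ z i ≠ z j ∧ z i ^ d = z j ^ d := by
    intro i j
    rw [vandermonde_mul_conjTranspose_apply_of_norm_eq_one hz,
      geom_sum_eq_zero_iff_pow_eq_one (Fin.pos i).ne', ne_eq, div_eq_one_iff_eq (hz0 j), div_pow,
      div_eq_one_iff_eq (pow_ne_zero _ (hz0 j))]
  rw [← Matrix.ext_iff]
  constructor
  · intro h
    have h' : ∀ i j, i ≠ j → z i ≠ z j ∧ z i ^ d = z j ^ d :=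
      fun i j hij => (hoff i j).mp (by simpa [hij] using h i j)
    refine ⟨fun i j hij => by_contra fun hne => (h' i j hne).1 hij, fun i j => ?_⟩
    rcases eq_or_ne i j with rfl | hij
    · rfl
    · exact (h' i j hij).2
  · rintro ⟨hinj, hpow⟩ i j
    rcases eq_or_ne i j with rfl | hij
    · simp [hdiag]
    · simpa [hij] using (hoff i j).mpr ⟨hinj.ne hij, hpow i j⟩

theorem injective_and_pow_eq_iff_exists_rotation [NeZero d] (hz : ∀ k, ‖z k‖ = 1) :
    (Function.Injective z ∧ ∀ i j, z i ^ d = z j ^ d) ↔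
      ∃ w : ℂ, ‖w‖ = 1 ∧ ∃ σ : Equiv.Perm (Fin d), ∀ k : Fin d,
        z (σ k) = w * Complex.exp (2 * Real.pi * Complex.I * k / d) := by
  have hζ := Complex.isPrimitiveRoot_exp d (NeZero.ne d)
  have hexp : ∀ k : ℕ, Complex.exp (2 * Real.pi * Complex.I * k / d) =
      Complex.exp (2 * Real.pi * Complex.I / d) ^ k := fun k => by
    rw [← Complex.exp_nat_mul]; ring_nf
  simp only [hexp]
  constructor
  · rintro ⟨hinj, hpow⟩
    have hw : z 0 ≠ 0 := norm_ne_zero_iff.mp (by simp [hz 0])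
    exact ⟨z 0, hz 0, (hζ.injective_and_pow_eq_iff_exists_perm hw).mp ⟨hinj, fun i => hpow i 0⟩⟩
  · rintro ⟨w, hw, hσ⟩
    have hw0 : w ≠ 0 := norm_ne_zero_iff.mp (by simp [hw])
    obtain ⟨hinj, hpow⟩ := (hζ.injective_and_pow_eq_iff_exists_perm hw0).mpr hσ
    exact ⟨hinj, fun i j => (hpow i).trans (hpow j).symm⟩

end UnitCircle

theorem vandermonde_unit_circle (d : ℕ) (hd : 2 ≤ d) (z : Fin d → ℂ)
    (hz : ∀ k, ‖z k‖ = 1) :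
    (∏ p ∈ Finset.univ.filter (fun p : Fin d × Fin d => p.1 < p.2),
        ‖z p.1 - z p.2‖ ^ 2 ≤ (d : ℝ) ^ d) ∧
      ((∏ p ∈ Finset.univ.filter (fun p : Fin d × Fin d => p.1 < p.2),
          ‖z p.1 - z p.2‖ ^ 2 = (d : ℝ) ^ d) ↔
        ∃ w : ℂ, ‖w‖ = 1 ∧ ∃ σ : Equiv.Perm (Fin d), ∀ k : Fin d,
          z (σ k) = w * Complex.exp (2 * Real.pi * Complex.I * k / d)) := by
  have : NeZero d := ⟨by omega⟩
  set G := vandermonde z * (vandermonde z)ᴴ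
  have hG : G.PosSemidef := posSemidef_self_mul_conjTranspose _
  have htr : G.trace = Fintype.card (Fin d) * ((d : ℝ) : ℂ) := by
    simpa using trace_vandermonde_mul_conjTranspose_of_norm_eq_one hz
  have hle := hG.det_le_pow_of_trace_eq (c := d) htr
  have heq := hG.det_eq_pow_iff_of_trace_eq (c := d) htr
  rw [det_mul_conjTranspose_self_s4, norm_det_vandermonde, ← prod_pow, Fintype.card_fin,
    ← RCLike.ofReal_pow] at hle heq
  rw [RCLike.ofReal_le_ofReal] at hle
  rw [RCLike.ofReal_inj, RCLike.ofReal_natCast] at heq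
  exact ⟨hle, heq.trans <| (vandermonde_mul_conjTranspose_eq_smul_one_iff hz).trans
    (injective_and_pow_eq_iff_exists_rotation hz)⟩
end
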